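/- Suppose {a; b₁, b₂} is a finitely supported tight framelet filter bank. Define the Laurent polynomial d_{b₁,b₂} by d_{b₁,b₂}(z²) := z[b₁(z)b₂(−z) − b₁(−z)b₂(z)]. Then d_{b₁,b₂} is a well-defined Laurent polynomial and |d_{b₁,b₂}(z²)|² = 1 − |ã(z)|² − |ã(−z)|² for all z ∈ 𝕋 = {z ∈ ℂ : |z| = 1}, where ã denotes the z-transform (Laurent polynomial) of a. -/

import Mathlib

noncomputable section
open LaurentPolynomial Matrix

/-- The adjoint (star) of a Laurent polynomial: (Σ u(k)zᵏ)⋆ = Σ conj(u(k)) z⁻ᵏ. -/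
def lstar (p : LaurentPolynomial ℂ) : LaurentPolynomial ℂ :=
  p.coeff.sum fun k c => LaurentPolynomial.C (starRingEnd ℂ c) * LaurentPolynomial.T (-k)

/-- Evaluation of a Laurent polynomial at a nonzero complex number. -/
def leval (z : ℂ) (p : LaurentPolynomial ℂ) : ℂ :=
  p.coeff.sum fun k c => c * z ^ k

/-- Substitution z ↦ -z in a Laurent polynomial. -/
def nsub (p : LaurentPolynomial ℂ) : LaurentPolynomial ℂ :=
  p.coeff.sum fun k c => LaurentPolynomial.C (c * (-1 : ℂ) ^ k) * LaurentPolynomial.T k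

/-- Substitution z ↦ z² in a Laurent polynomial. -/
def ssub (p : LaurentPolynomial ℂ) : LaurentPolynomial ℂ :=
  p.coeff.sum fun k c => LaurentPolynomial.C c * LaurentPolynomial.T (2 * k)

/-- Entrywise evaluation of a matrix of Laurent polynomials. -/
def meval {m n : ℕ} (z : ℂ) (M : Matrix (Fin m) (Fin n) (LaurentPolynomial ℂ)) :
    Matrix (Fin m) (Fin n) ℂ :=
  M.map (leval z)

/-- Star-adjoint transpose of a matrix of Laurent polynomials. -/
def mstar {m n : ℕ} (M : Matrix (Fin m) (Fin n) (LaurentPolynomial ℂ)) :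
    Matrix (Fin n) (Fin m) (LaurentPolynomial ℂ) :=
  (M.map lstar)ᵀ

/-- The γ-coset of a Laurent polynomial: coefficient of zᵏ is the coefficient of z^{γ+2k}. -/
def coset (γ : ℤ) (p : LaurentPolynomial ℂ) : LaurentPolynomial ℂ :=
  p.coeff.sum fun k c => if (k - γ) % 2 = 0 then LaurentPolynomial.C c * LaurentPolynomial.T ((k - γ) / 2) else 0

/-!
On the unit circle the star of a Laurent polynomial evaluates to the complex conjugate, so the
tight-frame identity evaluated at `z ∈ 𝕋` says that the rows `(ã(z), b̃₁(z), b̃₂(z))` and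
`(ã(-z), b̃₁(-z), b̃₂(-z))` are orthonormal in `ℂ³`. Lagrange's identity
`|u₁v₂ - v₁u₂|² = ‖u‖²‖v‖² - |⟨u, v⟩|²`, applied to their last two coordinates, gives
`(1 - |ã(z)|²)(1 - |ã(-z)|²) - |ã(z)|²|ã(-z)|²`. The Laurent polynomial
`z[b₁(z)b₂(-z) - b₁(-z)b₂(z)]` is invariant under `z ↦ -z`, so its odd coefficients vanish and it
is `d(z²)` with `d` its `0`-coset.
-/

section LaurentSums

variable {M : Type*} [AddCommMonoid M] (f : ℤ → ℂ → M)

lemma coeff_sum_add (hadd : ∀ k c d, f k (c + d) = f k c + f k d) (h0 : ∀ k, f k 0 = 0)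
    (p q : LaurentPolynomial ℂ) : (p + q).coeff.sum f = p.coeff.sum f + q.coeff.sum f :=
  Finsupp.sum_add_index' h0 hadd

lemma coeff_sum_C_mul_T (h0 : ∀ k, f k 0 = 0) (c : ℂ) (k : ℤ) :
    (C c * T k : LaurentPolynomial ℂ).coeff.sum f = f k c := by
  rw [← single_eq_C_mul_T, AddMonoidAlgebra.coeff_single, Finsupp.sum_single_index (h0 k)]

end LaurentSums

section Evaluation

variable (z : ℂ) (p q : LaurentPolynomial ℂ)

lemma leval_add : leval z (p + q) = leval z p + leval z q :=
  coeff_sum_add (fun k c => c * z ^ k) (fun _ _ _ => add_mul _ _ _) (fun _ => zero_mul _) p q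

lemma leval_sub : leval z (p - q) = leval z p - leval z q :=
  (AddMonoidHom.mk' (leval z) (leval_add z)).map_sub p q

lemma leval_C_mul_T (c : ℂ) (k : ℤ) : leval z (C c * T k) = c * z ^ k :=
  coeff_sum_C_mul_T (fun k c => c * z ^ k) (fun _ => zero_mul _) c k

lemma leval_eq_eval₂ (hz : z ≠ 0) : leval z p = eval₂ (RingHom.id ℂ) (Units.mk0 z hz) p := by
  induction p using LaurentPolynomial.induction_on' with
  | add p q hp hq => rw [leval_add, hp, hq, map_add]
  | C_mul_T k c => simp [leval_C_mul_T]

lemma leval_mul (hz : z ≠ 0) : leval z (p * q) = leval z p * leval z q := by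
  simp only [leval_eq_eval₂ z _ hz, map_mul]

lemma leval_zero : leval z 0 = 0 := Finsupp.sum_zero_index

lemma leval_one : leval z 1 = 1 := by
  simpa using leval_C_mul_T z 1 0

lemma leval_T_one : leval z (T 1) = z := by
  simpa using leval_C_mul_T z 1 1

lemma leval_lstar (hz : ‖z‖ = 1) : leval z (lstar p) = starRingEnd ℂ (leval z p) := by
  induction p using LaurentPolynomial.induction_on' with
  | add p q hp hq =>
    rw [lstar, coeff_sum_add, ← lstar, ← lstar, leval_add, hp, hq, leval_add, map_add]
    · intro k c d; simp [add_mul]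
    · intro k; simp
  | C_mul_T k c =>
    rw [lstar, coeff_sum_C_mul_T _ (by simp), leval_C_mul_T, leval_C_mul_T, map_mul, map_zpow₀,
      ← Complex.inv_eq_conj hz, _root_.inv_zpow, _root_.zpow_neg]

lemma leval_ssub : leval z (ssub p) = leval (z ^ 2) p := by
  induction p using LaurentPolynomial.induction_on' with
  | add p q hp hq =>
    rw [ssub, coeff_sum_add, ← ssub, ← ssub, leval_add, hp, hq, leval_add]
    · intro k c d; simp [add_mul]
    · intro k; simp
  | C_mul_T k c =>
    rw [ssub, coeff_sum_C_mul_T _ (by simp), leval_C_mul_T, leval_C_mul_T, ← zpow_natCast,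
      ← _root_.zpow_mul]
    norm_num

end Evaluation

section Substitution

variable (p q : LaurentPolynomial ℂ)

lemma nsub_add : nsub (p + q) = nsub p + nsub q :=
  coeff_sum_add (fun k c => C (c * (-1 : ℂ) ^ k) * T k) (fun _ _ _ => by simp [add_mul])
    (fun _ => by simp) p q

lemma nsub_C_mul_T (c : ℂ) (k : ℤ) : nsub (C c * T k) = C (c * (-1) ^ k) * T k :=
  coeff_sum_C_mul_T (fun k c => C (c * (-1 : ℂ) ^ k) * T k) (fun _ => by simp) c k

lemma leval_nsub (z : ℂ) : leval z (nsub p) = leval (-z) p := by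
  induction p using LaurentPolynomial.induction_on' with
  | add p q hp hq => rw [nsub_add, leval_add, leval_add, hp, hq]
  | C_mul_T k c =>
    rw [nsub_C_mul_T, leval_C_mul_T, leval_C_mul_T, neg_eq_neg_one_mul z, mul_zpow, mul_assoc]

lemma nsub_mul : nsub (p * q) = nsub p * nsub q := by
  induction p using LaurentPolynomial.induction_on' with
  | add p₁ p₂ h₁ h₂ => rw [add_mul, nsub_add, nsub_add, h₁, h₂, add_mul]
  | C_mul_T m a =>
    induction q using LaurentPolynomial.induction_on' with
    | add q₁ q₂ h₁ h₂ => rw [mul_add, nsub_add, nsub_add, h₁, h₂, mul_add]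
    | C_mul_T n b =>
      rw [show C a * T m * (C b * T n) = C (a * b) * T (m + n) by rw [map_mul, T_add]; ring,
        nsub_C_mul_T, nsub_C_mul_T, nsub_C_mul_T, zpow_add₀ (by norm_num), T_add]
      simp only [map_mul]
      ring

lemma nsub_sub : nsub (p - q) = nsub p - nsub q :=
  (AddMonoidHom.mk' nsub nsub_add).map_sub p q

lemma nsub_nsub : nsub (nsub p) = p := by
  induction p using LaurentPolynomial.induction_on' with
  | add p q hp hq => rw [nsub_add, nsub_add, hp, hq]
  | C_mul_T k c => rw [nsub_C_mul_T, nsub_C_mul_T, mul_assoc, ← mul_zpow]; norm_num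

lemma nsub_T_one : nsub (T 1) = -T 1 := by
  simpa using nsub_C_mul_T 1 1

lemma coeff_nsub (k : ℤ) : (nsub p).coeff k = p.coeff k * (-1) ^ k := by
  induction p using LaurentPolynomial.induction_on' with
  | add p q hp hq => rw [nsub_add, AddMonoidAlgebra.coeff_add, Finsupp.add_apply, hp, hq,
      AddMonoidAlgebra.coeff_add, Finsupp.add_apply, add_mul]
  | C_mul_T n c =>
    rw [nsub_C_mul_T, ← single_eq_C_mul_T, ← single_eq_C_mul_T, AddMonoidAlgebra.coeff_single,
      AddMonoidAlgebra.coeff_single, Finsupp.single_apply, Finsupp.single_apply]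
    split_ifs with h
    · rw [h]
    · simp

lemma coeff_eq_zero_of_nsub_eq (h : nsub p = p) {k : ℤ} (hk : Odd k) : p.coeff k = 0 := by
  have := coeff_nsub p k
  rw [h, hk.neg_one_zpow] at this
  linear_combination this / 2

lemma ssub_add : ssub (p + q) = ssub p + ssub q :=
  coeff_sum_add (fun k c => C c * T (2 * k)) (fun _ _ _ => by simp [add_mul]) (fun _ => by simp) p q

lemma ssub_C_mul_T (c : ℂ) (k : ℤ) : ssub (C c * T k) = C c * T (2 * k) :=
  coeff_sum_C_mul_T (fun k c => C c * T (2 * k)) (fun _ => by simp) c k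

lemma ssub_coset_zero_of_nsub_eq (h : nsub p = p) : ssub (coset 0 p) = p := by
  change AddMonoidHom.mk' ssub ssub_add (coset 0 p) = p
  rw [coset, map_finsuppSum]
  conv_rhs => rw [← AddMonoidAlgebra.sum_coeff_single p]
  refine Finsupp.sum_congr fun k hk => ?_
  have hk : Even k := Int.not_odd_iff_even.mp fun hodd =>
    Finsupp.mem_support_iff.mp hk (coeff_eq_zero_of_nsub_eq p h hodd)
  simp [Int.even_iff.mp hk, ssub_C_mul_T, Int.mul_ediv_cancel' (even_iff_two_dvd.mp hk),
    single_eq_C_mul_T]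

end Substitution

lemma meval_mul_mstar {m n k : ℕ} {z : ℂ} (hz : ‖z‖ = 1)
    (M : Matrix (Fin m) (Fin n) (LaurentPolynomial ℂ))
    (N : Matrix (Fin k) (Fin n) (LaurentPolynomial ℂ)) :
    meval z (M * mstar N) = meval z M * (meval z N)ᴴ := by
  have hz0 : z ≠ 0 := norm_ne_zero_iff.mp (hz ▸ one_ne_zero)
  ext i j
  simp only [meval, mstar, Matrix.map_apply, Matrix.mul_apply, Matrix.conjTranspose_apply,
    Matrix.transpose_apply, leval_eq_eval₂ z _ hz0, map_sum, map_mul]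
  simp [← leval_eq_eval₂ z _ hz0, leval_lstar z _ hz]

lemma meval_one {n : ℕ} (z : ℂ) :
    meval z (1 : Matrix (Fin n) (Fin n) (LaurentPolynomial ℂ)) = 1 := by
  ext i j
  simp [meval, Matrix.one_apply, apply_ite (leval z), leval_one, leval_zero]

open ComplexConjugate

lemma Complex.norm_mul_sub_mul_sq (u₁ u₂ v₁ v₂ : ℂ) :
    ‖u₁ * v₂ - v₁ * u₂‖ ^ 2 =
      (‖u₁‖ ^ 2 + ‖u₂‖ ^ 2) * (‖v₁‖ ^ 2 + ‖v₂‖ ^ 2) - ‖u₁ * conj v₁ + u₂ * conj v₂‖ ^ 2 := by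
  apply Complex.ofReal_injective
  push_cast
  simp only [← Complex.mul_conj', map_sub, map_add, map_mul, starRingEnd_self_apply]
  ring

lemma norm_minor_sq_of_mul_conjTranspose_eq_one {A B₁ B₂ A' B₁' B₂' : ℂ}
    (h : !![A, B₁, B₂; A', B₁', B₂'] * (!![A, B₁, B₂; A', B₁', B₂'])ᴴ = 1) :
    ‖B₁ * B₂' - B₁' * B₂‖ ^ 2 = 1 - ‖A‖ ^ 2 - ‖A'‖ ^ 2 := by
  have h₀₀ := congrFun (congrFun h 0) 0
  have h₀₁ := congrFun (congrFun h 0) 1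
  have h₁₁ := congrFun (congrFun h 1) 1
  simp only [Fin.isValue, Matrix.mul_apply, of_apply, cons_val', cons_val_fin_one, cons_val_zero,
    conjTranspose_apply, RCLike.star_def, Complex.mul_conj', Fin.sum_univ_three, cons_val_one,
    cons_val, one_apply_eq, ne_eq, zero_ne_one, not_false_eq_true, one_apply_ne] at h₀₀ h₀₁ h₁₁
  have hu : ‖B₁‖ ^ 2 + ‖B₂‖ ^ 2 = 1 - ‖A‖ ^ 2 := by
    exact_mod_cast (by linear_combination h₀₀ : (‖B₁‖ ^ 2 + ‖B₂‖ ^ 2 : ℂ) = 1 - ‖A‖ ^ 2)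
  have hv : ‖B₁'‖ ^ 2 + ‖B₂'‖ ^ 2 = 1 - ‖A'‖ ^ 2 := by
    exact_mod_cast (by linear_combination h₁₁ : (‖B₁'‖ ^ 2 + ‖B₂'‖ ^ 2 : ℂ) = 1 - ‖A'‖ ^ 2)
  have huv : ‖B₁ * conj B₁' + B₂ * conj B₂'‖ = ‖A‖ * ‖A'‖ := by
    rw [show B₁ * conj B₁' + B₂ * conj B₂' = -(A * conj A') by linear_combination h₀₁]
    simp
  rw [Complex.norm_mul_sub_mul_sq, hu, hv, huv]
  ring

theorem stmt17 (a b₁ b₂ : LaurentPolynomial ℂ)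
    (h : (!![a, b₁, b₂; nsub a, nsub b₁, nsub b₂] : Matrix (Fin 2) (Fin 3) (LaurentPolynomial ℂ)) *
          mstar !![a, b₁, b₂; nsub a, nsub b₁, nsub b₂] = 1) :
    ∃ d : LaurentPolynomial ℂ,
      ssub d = LaurentPolynomial.T 1 * (b₁ * nsub b₂ - nsub b₁ * b₂) ∧
      ∀ z : ℂ, ‖z‖ = 1 →
        ‖leval (z ^ 2) d‖ ^ 2 =
          1 - ‖leval z a‖ ^ 2 - ‖leval (-z) a‖ ^ 2 := by
  set q := T 1 * (b₁ * nsub b₂ - nsub b₁ * b₂) with hq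
  have hq_even : nsub q = q := by
    rw [hq, nsub_mul, nsub_sub, nsub_mul, nsub_mul, nsub_nsub, nsub_nsub, nsub_T_one]
    ring
  have hd := ssub_coset_zero_of_nsub_eq q hq_even
  refine ⟨coset 0 q, hd, fun z hz => ?_⟩
  have hz0 : z ≠ 0 := norm_ne_zero_iff.mp (hz ▸ one_ne_zero)
  have hframe := congrArg (meval z) h
  rw [meval_mul_mstar hz, meval_one] at hframe
  have hrows : meval z !![a, b₁, b₂; nsub a, nsub b₁, nsub b₂] =
      !![leval z a, leval z b₁, leval z b₂; leval (-z) a, leval (-z) b₁, leval (-z) b₂] := by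
    ext i j
    fin_cases i <;> fin_cases j <;> simp [meval, leval_nsub]
  rw [hrows] at hframe
  calc ‖leval (z ^ 2) (coset 0 q)‖ ^ 2 = ‖leval z q‖ ^ 2 := by rw [← leval_ssub, hd]
    _ = ‖leval z b₁ * leval (-z) b₂ - leval (-z) b₁ * leval z b₂‖ ^ 2 := by
      rw [hq, leval_mul _ _ _ hz0, leval_sub, leval_mul _ _ _ hz0, leval_mul _ _ _ hz0,
        leval_T_one, leval_nsub, leval_nsub, norm_mul, hz, one_mul]
    _ = 1 - ‖leval z a‖ ^ 2 - ‖leval (-z) a‖ ^ 2 := norm_minor_sq_of_mul_conjTranspose_eq_one hframe
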